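/- Let p ≥ 2, let μ be a probability measure on ℝ^d with ∫‖x‖₂^p dμ(x) < ∞, and suppose β ≥ 1 satisfies (∫|⟨x,v⟩|^p dμ(x))^{1/p} ≤ β (∫|⟨x,v⟩|² dμ(x))^{1/2} for all v ∈ ℝ^d. Then for every d×d real matrix M, (∫‖Mx‖₂^p dμ(x))^{1/p} ≤ β ‖B^{1/2} Mᵀ‖_F, where B = ∫ xxᵀ dμ(x). -/

import Mathlib

open MeasureTheory
open scoped Matrix
open scoped ENNReal RealInnerProductSpace Classical

noncomputable section

/-- The outer product `x xᵀ` of a vector in Euclidean space, as a matrix. -/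
def outer {d : ℕ} (x : EuclideanSpace ℝ (Fin d)) : Matrix (Fin d) (Fin d) ℝ :=
  Matrix.of fun i j => x i * x j

/-- The trace inner product `⟨A, B⟩ = Tr (A B)` on symmetric matrices. -/
def minner {d : ℕ} (A B : Matrix (Fin d) (Fin d) ℝ) : ℝ :=
  Matrix.trace (A * B)

/-- The Frobenius norm of a matrix. -/
def frobNorm {d : ℕ} (M : Matrix (Fin d) (Fin d) ℝ) : ℝ :=
  Real.sqrt (∑ i, ∑ j, (M i j) ^ 2)

/-- Entrywise integral of a matrix-valued function. -/
def mIntegral {d : ℕ} (μ : Measure (EuclideanSpace ℝ (Fin d)))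
    (F : EuclideanSpace ℝ (Fin d) → Matrix (Fin d) (Fin d) ℝ) :
    Matrix (Fin d) (Fin d) ℝ :=
  Matrix.of fun i j => ∫ x, F x i j ∂μ

/-- The fourth moment operator `T_μ (A) = ∫ ⟨A, xxᵀ⟩ xxᵀ dμ(x)`. -/
def fourthMomentOp {d : ℕ} (μ : Measure (EuclideanSpace ℝ (Fin d)))
    (A : Matrix (Fin d) (Fin d) ℝ) : Matrix (Fin d) (Fin d) ℝ :=
  mIntegral μ (fun x => minner A (outer x) • outer x)

/-- The second moment matrix `B = ∫ xxᵀ dμ(x)`. -/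
def secondMoment {d : ℕ} (μ : Measure (EuclideanSpace ℝ (Fin d))) :
    Matrix (Fin d) (Fin d) ℝ :=
  mIntegral μ outer

/-- `lam : ℕ → ℝ` lists the eigenvalues (with multiplicity) of the fourth moment operator
`T_μ`, viewed as an operator on the `d(d+1)/2`-dimensional inner product space of symmetric
matrices, in descending order, padded by `0` beyond index `d(d+1)/2`. -/
def IsEigenSeq {d : ℕ} (μ : Measure (EuclideanSpace ℝ (Fin d))) (lam : ℕ → ℝ) : Prop :=
  Antitone lam ∧ (∀ i, d * (d + 1) / 2 ≤ i → lam i = 0) ∧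
  ∃ b : Fin (d * (d + 1) / 2) → Matrix (Fin d) (Fin d) ℝ,
    (∀ i, (b i).IsSymm) ∧
    (∀ i j, minner (b i) (b j) = if i = j then 1 else 0) ∧
    (∀ A : Matrix (Fin d) (Fin d) ℝ, A.IsSymm → A ∈ Submodule.span ℝ (Set.range b)) ∧
    (∀ i : Fin (d * (d + 1) / 2), fourthMomentOp μ (b i) = lam i • b i)

/-- The second order separation parameter `s(μ)`. -/
def sep {d : ℕ} (μ : Measure (EuclideanSpace ℝ (Fin d))) : ℝ :=
  (1 / 2) * sSup { r : ℝ | ∃ μ₁ μ₂ : Measure (EuclideanSpace ℝ (Fin d)),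
    IsProbabilityMeasure μ₁ ∧ IsProbabilityMeasure μ₂ ∧
    μ = (2 : ℝ≥0∞)⁻¹ • μ₁ + (2 : ℝ≥0∞)⁻¹ • μ₂ ∧
    r = frobNorm (secondMoment μ₁ - secondMoment μ₂) }

/-- The positive semidefinite square root of a positive semidefinite matrix, spelled out as in
the older Mathlib's `Matrix.PosSemidef.sqrt` (removed since): `U diag(√λ) Uᴴ`. -/
def Matrix.PosSemidef.sqrt {d : ℕ} {B : Matrix (Fin d) (Fin d) ℝ} (hB : B.PosSemidef) :
    Matrix (Fin d) (Fin d) ℝ :=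
  hB.1.eigenvectorUnitary.1 * Matrix.diagonal ((↑) ∘ Real.sqrt ∘ hB.1.eigenvalues) *
    (star hB.1.eigenvectorUnitary : Matrix (Fin d) (Fin d) ℝ)

/-- The standard Gaussian measure `N(0, I)` on `ℝ^d`. -/
def stdGaussian (d : ℕ) : Measure (EuclideanSpace ℝ (Fin d)) :=
  (Measure.pi fun _ : Fin d => ProbabilityTheory.gaussianReal 0 1).map
    (MeasurableEquiv.toLp 2 (Fin d → ℝ))

/-- The centered Gaussian measure `N(0, B)` on `ℝ^d` with positive semidefinite
covariance matrix `B`, obtained as the pushforward of `N(0, I)` by `B^{1/2}`. -/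
def gaussianCov {d : ℕ} (B : Matrix (Fin d) (Fin d) ℝ) :
    Measure (EuclideanSpace ℝ (Fin d)) :=
  if hB : B.PosSemidef then (stdGaussian d).map (fun x => Matrix.toEuclideanLin hB.sqrt x)
  else 0

/-- The positive semidefinite square root `B^{1/2}` of a positive semidefinite matrix. -/
def psdSqrt {d : ℕ} (B : Matrix (Fin d) (Fin d) ℝ) : Matrix (Fin d) (Fin d) ℝ :=
  if hB : B.PosSemidef then hB.sqrt else 0

/-! Write `‖Mx‖² = ∑ᵢ ⟪x, mᵢ⟫²`, where `mᵢ` are the rows of `M`. Since `p / 2 ≥ 1`, Minkowski's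
inequality in `L^{p/2}` bounds `‖Mx‖²_{Lᵖ}` by `∑ᵢ ‖⟪·, mᵢ⟫‖²_{Lᵖ}`, and the `Lᵖ`-`L²` hypothesis
bounds each term by `β² ∫ ⟪x, mᵢ⟫² dμ = β² mᵢᵀ B mᵢ`. Finally
`∑ᵢ mᵢᵀ B mᵢ = tr (M B Mᵀ) = ‖B^{1/2} Mᵀ‖_F²`. -/

section Lp

variable {α : Type*} [MeasurableSpace α] {μ : Measure α}

theorem eLpNorm_sq_eq_eLpNorm_norm_sq {E : Type*} [NormedAddCommGroup E] (f : α → E)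
    (p : ℝ≥0∞) : eLpNorm f p μ ^ 2 = eLpNorm (fun x => ‖f x‖ ^ 2) (p / 2) μ := by
  simp_rw [← Real.rpow_two, eLpNorm_norm_rpow _ two_pos, ENNReal.ofReal_ofNat,
    ENNReal.div_mul_cancel two_ne_zero ENNReal.ofNat_ne_top, ENNReal.rpow_two]

theorem eLpNorm_sq_le_sum_eLpNorm_apply_sq {ι : Type*} [Fintype ι] {p : ℝ≥0∞} (hp : 2 ≤ p)
    {F : α → EuclideanSpace ℝ ι} (hF : AEStronglyMeasurable F μ) :
    eLpNorm F p μ ^ 2 ≤ ∑ i, eLpNorm (fun x => F x i) p μ ^ 2 := by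
  have hp2 : 1 ≤ p / 2 := by
    rwa [ENNReal.le_div_iff_mul_le (by simp) (by simp), one_mul]
  calc eLpNorm F p μ ^ 2 = eLpNorm (∑ i, fun x => ‖F x i‖ ^ 2) (p / 2) μ := by
        rw [eLpNorm_sq_eq_eLpNorm_norm_sq]; congr 1; ext x
        simp only [Finset.sum_apply, EuclideanSpace.norm_sq_eq]
    _ ≤ ∑ i, eLpNorm (fun x => ‖F x i‖ ^ 2) (p / 2) μ :=
        eLpNorm_sum_le (fun i _ => ((EuclideanSpace.proj (𝕜 := ℝ) i).continuous
          |>.comp_aestronglyMeasurable hF).norm.pow 2) hp2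
    _ = ∑ i, eLpNorm (fun x => F x i) p μ ^ 2 := by simp only [eLpNorm_sq_eq_eLpNorm_norm_sq]

theorem MeasureTheory.MemLp.eLpNorm_ofReal_eq_integral_rpow_norm {E : Type*}
    [NormedAddCommGroup E] {p : ℝ} {f : α → E} (hf : MemLp f (.ofReal p) μ) (hp : 0 < p) :
    eLpNorm f (.ofReal p) μ = .ofReal ((∫ x, ‖f x‖ ^ p ∂μ) ^ (1 / p)) := by
  rw [hf.eLpNorm_eq_integral_rpow_norm (by simpa using hp) ENNReal.ofReal_ne_top,
    ENNReal.toReal_ofReal hp.le, one_div]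

theorem MeasureTheory.MemLp.eLpNorm_sq_le_of_integral_rpow_le {p β : ℝ} {f : α → ℝ}
    (hf : MemLp f (.ofReal p) μ) (hp : 0 < p)
    (h : (∫ x, |f x| ^ p ∂μ) ^ (1 / p) ≤ β * (∫ x, f x ^ 2 ∂μ) ^ ((1 : ℝ) / 2)) :
    eLpNorm f (.ofReal p) μ ^ 2 ≤ .ofReal (β ^ 2 * ∫ x, f x ^ 2 ∂μ) := by
  have hL2 : ((∫ x, f x ^ 2 ∂μ) ^ ((1 : ℝ) / 2)) ^ 2 = ∫ x, f x ^ 2 ∂μ := by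
    rw [← Real.rpow_natCast, ← Real.rpow_mul (integral_nonneg fun x => sq_nonneg _)]
    norm_num
  rw [hf.eLpNorm_ofReal_eq_integral_rpow_norm hp, ← ENNReal.ofReal_pow (by positivity), ← hL2,
    ← mul_pow]
  exact ENNReal.ofReal_le_ofReal (pow_le_pow_left₀ (by positivity) h 2)

end Lp

namespace Matrix.PosSemidef

variable {d : ℕ} {B : Matrix (Fin d) (Fin d) ℝ}

theorem sqrt_mul_self (hB : B.PosSemidef) : hB.sqrt * hB.sqrt = B := by
  set U : Matrix (Fin d) (Fin d) ℝ := hB.1.eigenvectorUnitary.1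
  set D : Matrix (Fin d) (Fin d) ℝ := diagonal ((↑) ∘ Real.sqrt ∘ hB.1.eigenvalues)
  have hU : star U * U = 1 := Unitary.coe_star_mul_self _
  have hD : D * D = diagonal (RCLike.ofReal ∘ hB.1.eigenvalues) := by
    rw [diagonal_mul_diagonal]
    congr 1; funext i
    simp [Real.mul_self_sqrt (hB.eigenvalues_nonneg i)]
  calc hB.sqrt * hB.sqrt = U * (D * (star U * U) * D) * star U := by
        simp only [sqrt, U, D, Matrix.mul_assoc]
    _ = B := by
        rw [hU, Matrix.mul_one, hD]
        conv_rhs => rw [hB.1.spectral_theorem, Unitary.conjStarAlgAut_apply]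

theorem transpose_sqrt (hB : B.PosSemidef) : hB.sqrtᵀ = hB.sqrt := by
  simp [sqrt, transpose_mul, Matrix.mul_assoc, star_eq_conjTranspose]

end Matrix.PosSemidef

theorem transpose_psdSqrt_mul_self {d : ℕ} {B : Matrix (Fin d) (Fin d) ℝ} (hB : B.PosSemidef) :
    (psdSqrt B)ᵀ * psdSqrt B = B := by
  rw [psdSqrt, dif_pos hB, hB.transpose_sqrt, hB.sqrt_mul_self]

theorem frobNorm_sq {d : ℕ} (N : Matrix (Fin d) (Fin d) ℝ) :
    frobNorm N ^ 2 = (Nᵀ * N).trace := by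
  rw [frobNorm, Real.sq_sqrt (by positivity), Finset.sum_comm]
  simp [Matrix.trace, Matrix.mul_apply, sq]

theorem frobNorm_psdSqrt_mul_transpose_sq {d : ℕ} {B : Matrix (Fin d) (Fin d) ℝ}
    (hB : B.PosSemidef) (M : Matrix (Fin d) (Fin d) ℝ) :
    frobNorm (psdSqrt B * Mᵀ) ^ 2 = ∑ i, M i ⬝ᵥ B *ᵥ M i := by
  rw [frobNorm_sq, Matrix.transpose_mul, Matrix.transpose_transpose, Matrix.mul_assoc,
    ← Matrix.mul_assoc (psdSqrt B)ᵀ, transpose_psdSqrt_mul_self hB]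
  simp [Matrix.trace, Matrix.mul_apply, dotProduct, Matrix.mulVec, Finset.mul_sum]

section SecondMoment

variable {d : ℕ} {μ : Measure (EuclideanSpace ℝ (Fin d))}

theorem integrable_apply_mul_apply (hμ : MemLp id 2 μ) (j k : Fin d) :
    Integrable (fun x : EuclideanSpace ℝ (Fin d) => x j * x k) μ := by
  have hcoord : ∀ i, MemLp (fun x : EuclideanSpace ℝ (Fin d) => x i) 2 μ := fun i =>
    hμ.continuousLinearMap_comp (EuclideanSpace.proj (𝕜 := ℝ) i)
  exact (hcoord j).integrable_mul (hcoord k)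

theorem integral_inner_sq_eq_secondMoment (hμ : MemLp id 2 μ) (v : EuclideanSpace ℝ (Fin d)) :
    ∫ x, ⟪x, v⟫ ^ 2 ∂μ = ⇑v ⬝ᵥ secondMoment μ *ᵥ ⇑v := by
  have hexpand : ∀ x : EuclideanSpace ℝ (Fin d),
      ⟪x, v⟫ ^ 2 = ∑ j, ∑ k, v j * v k * (x j * x k) := fun x => by
    simp only [EuclideanSpace.inner_eq_star_dotProduct, dotProduct, star_trivial, sq,
      Finset.sum_mul_sum]
    exact Finset.sum_congr rfl fun j _ => Finset.sum_congr rfl fun k _ => by ring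
  simp_rw [hexpand]
  rw [integral_finsetSum _ fun j _ => integrable_finsetSum _ fun k _ =>
    (integrable_apply_mul_apply hμ j k).const_mul _]
  simp_rw [integral_finsetSum _ fun k _ => (integrable_apply_mul_apply hμ _ k).const_mul _,
    integral_const_mul]
  simp only [secondMoment, mIntegral, outer, Matrix.of_apply, dotProduct, Matrix.mulVec,
    Finset.mul_sum]
  exact Finset.sum_congr rfl fun j _ => Finset.sum_congr rfl fun k _ => by ring

theorem secondMoment_posSemidef (hμ : MemLp id 2 μ) : (secondMoment μ).PosSemidef := by
  refine Matrix.PosSemidef.of_dotProduct_mulVec_nonneg ?_ fun y => ?_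
  · ext j k
    simp [secondMoment, mIntegral, outer, mul_comm]
  · rw [star_trivial, ← integral_inner_sq_eq_secondMoment hμ (WithLp.toLp 2 y)]
    exact integral_nonneg fun x => sq_nonneg _

theorem eLpNorm_toEuclideanLin_sq_le [IsFiniteMeasure μ] {p β : ℝ} (hp : 2 ≤ p) (hX : MemLp id (.ofReal p) μ)
    (hlpl2 : ∀ v : EuclideanSpace ℝ (Fin d),
      (∫ x, |⟪x, v⟫| ^ p ∂μ) ^ (1 / p) ≤ β * (∫ x, ⟪x, v⟫ ^ 2 ∂μ) ^ ((1 : ℝ) / 2))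
    (M : Matrix (Fin d) (Fin d) ℝ) :
    eLpNorm (fun x => Matrix.toEuclideanLin M x) (.ofReal p) μ ^ 2 ≤
      .ofReal (β ^ 2 * frobNorm (psdSqrt (secondMoment μ) * Mᵀ) ^ 2) := by
  have hp2 : (2 : ℝ≥0∞) ≤ .ofReal p := by simpa using ENNReal.ofReal_le_ofReal hp
  have hX2 : MemLp id 2 μ := hX.mono_exponent hp2
  have hB := secondMoment_posSemidef hX2
  have hrow : ∀ i, eLpNorm (fun x => Matrix.toEuclideanLin M x i) (.ofReal p) μ ^ 2 ≤
      .ofReal (β ^ 2 * (M i ⬝ᵥ secondMoment μ *ᵥ M i)) := fun i => by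
    have hMi : (fun x => Matrix.toEuclideanLin M x i) = fun x => ⟪x, WithLp.toLp 2 (M i)⟫ :=
      rfl
    rw [hMi, ← integral_inner_sq_eq_secondMoment hX2]
    exact (hX.inner_const _).eLpNorm_sq_le_of_integral_rpow_le (by linarith) (hlpl2 _)
  calc eLpNorm (fun x => Matrix.toEuclideanLin M x) (.ofReal p) μ ^ 2
      ≤ ∑ i, eLpNorm (fun x => Matrix.toEuclideanLin M x i) (.ofReal p) μ ^ 2 :=
        eLpNorm_sq_le_sum_eLpNorm_apply_sq hp2 (by fun_prop)
    _ ≤ ∑ i, ENNReal.ofReal (β ^ 2 * (M i ⬝ᵥ secondMoment μ *ᵥ M i)) :=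
        Finset.sum_le_sum fun i _ => hrow i
    _ = .ofReal (β ^ 2 * frobNorm (psdSqrt (secondMoment μ) * Mᵀ) ^ 2) := by
        rw [← ENNReal.ofReal_sum_of_nonneg fun i _ => mul_nonneg (sq_nonneg β)
          (by simpa using hB.dotProduct_mulVec_nonneg (M i)), ← Finset.mul_sum,
          frobNorm_psdSqrt_mul_transpose_sq hB]

end SecondMoment

/-- under `Lᵖ`-`L²` equivalence with constant `β`, for every `d × d` matrix
`M`, `(∫ ‖Mx‖₂ᵖ dμ(x))^{1/p} ≤ β ‖B^{1/2} Mᵀ‖_F`. -/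
theorem lp_l2_matrix_bound
    (d : ℕ) (p : ℝ) (hp : 2 ≤ p) (μ : Measure (EuclideanSpace ℝ (Fin d)))
    [IsProbabilityMeasure μ] (hmom : Integrable (fun x => ‖x‖ ^ p) μ)
    (β : ℝ) (hβ : 1 ≤ β)
    (hlpl2 : ∀ v : EuclideanSpace ℝ (Fin d),
      (∫ x, (|⟪x, v⟫|) ^ p ∂μ) ^ (1 / p) ≤
        β * (∫ x, ⟪x, v⟫ ^ 2 ∂μ) ^ ((1 : ℝ) / 2))
    (M : Matrix (Fin d) (Fin d) ℝ) :
    (∫ x, ‖Matrix.toEuclideanLin M x‖ ^ p ∂μ) ^ (1 / p) ≤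
      β * frobNorm (psdSqrt (secondMoment μ) * Mᵀ) := by
  have hp0 : 0 < p := by linarith
  have hX : MemLp id (.ofReal p) μ :=
    (integrable_norm_rpow_iff aestronglyMeasurable_id (by simpa using hp0)
      ENNReal.ofReal_ne_top).1 (by simpa [ENNReal.toReal_ofReal hp0.le] using hmom)
  have hMX : MemLp (fun x => Matrix.toEuclideanLin M x) (.ofReal p) μ :=
    hX.continuousLinearMap_comp (Matrix.toEuclideanLin M).toContinuousLinearMap
  have hβC : 0 ≤ β * frobNorm (psdSqrt (secondMoment μ) * Mᵀ) :=
    mul_nonneg (by linarith) (Real.sqrt_nonneg _)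
  rw [← ENNReal.ofReal_le_ofReal_iff hβC, ← hMX.eLpNorm_ofReal_eq_integral_rpow_norm hp0,
    ← ENNReal.pow_le_pow_left_iff two_ne_zero, ← ENNReal.ofReal_pow hβC, mul_pow]
  exact eLpNorm_toEuclideanLin_sq_le hp hX hlpl2 M

end
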